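/- arXiv:1703.09669 — 2 statements merged into one kernel-verified Lean document; each statement's English description precedes it below -/
import Mathlib

section
/- Under any (history-dependent) allocation policy, for every subset S of nodes the long-run received resources cannot exceed the total endowment of the neighbors of S. Precisely: on a probability space, suppose for each node i the generated resources D_i(t), t = 1,2,…, are i.i.d. random variables with 0 ≤ D_i(t) ≤ B and E[D_i(t)] = D_i > 0 (the vectors (D_i(t))_{i∈N} being i.i.d. across t), and suppose D_{ij}(t) ≥ 0 are random variables (the amount node i gives node j at time t, equal to 0 unless j ∈ N_i) that satisfy, almost surely for every node i and every t, Σ_{τ=1}^{t} Σ_{j∈N_i} D_{ij}(τ) ≤ Σ_{τ=1}^{t} D_i(τ). Let R_i(t) = Σ_{j∈N_i} D_{ji}(t) and R̄_i(t) = (1/t) Σ_{τ=1}^{t} R_i(τ). Then almost surely, for every S ⊆ N, limsup_{t→∞} Σ_{i∈S} R̄_i(t) ≤ f(S) and Σ_{i∈S} liminf_{t→∞} R̄_i(t) ≤ f(S). -/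
open Finset
open scoped Classical

noncomputable section

namespace SharingEcon

variable {V : Type*} [Fintype V] [DecidableEq V]

/-- The set of neighbors of a set of nodes: `N_S = ⋃ i ∈ S, N_i`. -/
def nbrs (G : SimpleGraph V) [DecidableRel G.Adj] (S : Finset V) : Finset V :=
  S.biUnion fun i => G.neighborFinset i

/-- The set function `f(S) = ∑_{j ∈ N_S} D_j`. -/
def fS (G : SimpleGraph V) [DecidableRel G.Adj] (D : V → ℝ) (S : Finset V) : ℝ :=
  ∑ j ∈ nbrs G S, D j

/-- The polymatroid polyhedron `A` of a set function `f`. -/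
def polyA (f : Finset V → ℝ) : Set (V → ℝ) :=
  {r | (∀ i, 0 ≤ r i) ∧ ∀ S : Finset V, ∑ i ∈ S, r i ≤ f S}

/-- The base `A₀` of the polymatroid. -/
def polyBase (f : Finset V → ℝ) : Set (V → ℝ) :=
  {r | r ∈ polyA f ∧ ∑ i, r i = f Finset.univ}

/-- The coordinates of a vector sorted in nondecreasing order. -/
def sortedVec (x : V → ℝ) : List ℝ :=
  (Finset.univ.val.map x).sort (· ≤ ·)

/-- `x` is lexicographically at least `y` (comparing sorted coordinate vectors). -/
def lexGE (x y : V → ℝ) : Prop :=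
  sortedVec x = sortedVec y ∨
    ∃ k : ℕ, (∀ j < k, (sortedVec x).getD j 0 = (sortedVec y).getD j 0) ∧
      (sortedVec y).getD k 0 < (sortedVec x).getD k 0

/-- `r` is lexicographically optimal in `A` for the sharing-ratio vectors `(r i / D i)`. -/
def LexOptimal (A : Set (V → ℝ)) (D : V → ℝ) (r : V → ℝ) : Prop :=
  r ∈ A ∧ ∀ r' ∈ A, lexGE (fun i => r i / D i) (fun i => r' i / D i)

/-- The sharing ratio of node `i`. -/
def ratio (D r : V → ℝ) (i : V) : ℝ := r i / D i

/-- The distinct values of the sharing ratios, sorted increasingly. -/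
def vals (D r : V → ℝ) : List ℝ :=
  (Finset.univ.image (ratio D r)).sort (· ≤ ·)

/-- The number `K(r)` of distinct sharing-ratio values. -/
def numLevels (D r : V → ℝ) : ℕ := (vals D r).length

/-- The `k`-th smallest distinct ratio value `v_k(r)` (1-indexed). -/
def v (D r : V → ℝ) (k : ℕ) : ℝ := (vals D r).getD (k - 1) 0

/-- The `k`-th level set `L_k(r)` (1-indexed). -/
def level (D r : V → ℝ) (k : ℕ) : Finset V :=
  Finset.univ.filter fun i => ratio D r i = v D r k

end SharingEcon
open MeasureTheory ProbabilityTheory Filter Topology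

/-! Every unit received by `S` is given by a neighbour of `S`, and no node gives away more than
it has generated, so the time-averaged receipts of `S` are bounded pathwise by the time-averaged
generation of `N_S`; by the strong law the latter converges almost surely to `f(S)`. The bound on
`∑ liminf` then follows from the superadditivity of `liminf`. -/

namespace SharingEcon

section Graph

variable {V : Type*} [Fintype V] [DecidableEq V] (G : SimpleGraph V) [DecidableRel G.Adj]

lemma sum_sum_neighborFinset_le_sum_nbrs (S : Finset V) {f : V → V → ℝ}
    (hf : ∀ j i, 0 ≤ f j i) :
    ∑ i ∈ S, ∑ j ∈ G.neighborFinset i, f j i ≤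
      ∑ j ∈ nbrs G S, ∑ i ∈ G.neighborFinset j, f j i := by
  have hswap : ∑ i ∈ S, ∑ j ∈ G.neighborFinset i, f j i =
      ∑ j ∈ nbrs G S, ∑ i ∈ (G.neighborFinset j).filter (· ∈ S), f j i :=
    Finset.sum_comm' fun i j => by
      simp only [nbrs, mem_biUnion, mem_filter, SimpleGraph.mem_neighborFinset]
      exact ⟨fun ⟨hi, hij⟩ => ⟨⟨hij.symm, hi⟩, i, hi, hij⟩, fun ⟨⟨hji, hi⟩, _⟩ => ⟨hi, hji.symm⟩⟩
  rw [hswap]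
  exact sum_le_sum fun j _ =>
    sum_le_sum_of_subset_of_nonneg (filter_subset _ _) fun i _ _ => hf j i

lemma sum_received_le_sum_generated (S : Finset V) (T : Finset ℕ) {alloc : ℕ → V → V → ℝ}
    {gen : ℕ → V → ℝ} (halloc_nonneg : ∀ τ i j, 0 ≤ alloc τ i j)
    (hbudget : ∀ i, ∑ τ ∈ T, ∑ j ∈ G.neighborFinset i, alloc τ i j ≤ ∑ τ ∈ T, gen τ i) :
    ∑ i ∈ S, ∑ τ ∈ T, ∑ j ∈ G.neighborFinset i, alloc τ j i ≤
      ∑ j ∈ nbrs G S, ∑ τ ∈ T, gen τ j :=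
  calc ∑ i ∈ S, ∑ τ ∈ T, ∑ j ∈ G.neighborFinset i, alloc τ j i
      = ∑ i ∈ S, ∑ j ∈ G.neighborFinset i, ∑ τ ∈ T, alloc τ j i :=
        sum_congr rfl fun _ _ => sum_comm
    _ ≤ ∑ j ∈ nbrs G S, ∑ i ∈ G.neighborFinset j, ∑ τ ∈ T, alloc τ j i :=
        sum_sum_neighborFinset_le_sum_nbrs G S fun j i =>
          sum_nonneg fun τ _ => halloc_nonneg τ j i
    _ = ∑ j ∈ nbrs G S, ∑ τ ∈ T, ∑ i ∈ G.neighborFinset j, alloc τ j i :=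
        sum_congr rfl fun _ _ => sum_comm
    _ ≤ ∑ j ∈ nbrs G S, ∑ τ ∈ T, gen τ j := sum_le_sum fun j _ => hbudget j

end Graph

section Limits

variable {ι β : Type*} {l : Filter β} [l.NeBot]

lemma sum_liminf_le_liminf_sum (s : Finset ι) {a : ι → β → ℝ}
    (hbelow : ∀ i ∈ s, IsBoundedUnder (· ≥ ·) l (a i))
    (habove : ∀ i ∈ s, IsBoundedUnder (· ≤ ·) l (a i)) :
    ∑ i ∈ s, liminf (a i) l ≤ liminf (fun t => ∑ i ∈ s, a i t) l := by
  induction s using Finset.induction_on with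
  | empty => simp
  | @insert k s hk ih =>
    simp only [forall_mem_insert] at hbelow habove
    have hsum_below : IsBoundedUnder (· ≥ ·) l (fun t => ∑ i ∈ s, a i t) := by
      rw [← Finset.sum_fn]; exact isBoundedUnder_ge_sum s hbelow.2
    have hsum_above : IsBoundedUnder (· ≤ ·) l (fun t => ∑ i ∈ s, a i t) := by
      rw [← Finset.sum_fn]; exact isBoundedUnder_le_sum s habove.2
    simp only [sum_insert hk]
    calc liminf (a k) l + ∑ i ∈ s, liminf (a i) l
        ≤ liminf (a k) l + liminf (fun t => ∑ i ∈ s, a i t) l :=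
          add_le_add_right (ih hbelow.2 habove.2) _
      _ ≤ liminf (fun t => a k t + ∑ i ∈ s, a i t) l :=
          le_liminf_add hbelow.1 habove.1 hsum_below hsum_above.isCoboundedUnder_ge

lemma limsup_sum_le_and_sum_liminf_le (s : Finset ι) {a : ι → β → ℝ} {b : β → ℝ} {c : ℝ}
    (ha : ∀ i t, 0 ≤ a i t) (hab : ∀ t, ∑ i ∈ s, a i t ≤ b t) (hb : Tendsto b l (𝓝 c)) :
    limsup (fun t => ∑ i ∈ s, a i t) l ≤ c ∧ ∑ i ∈ s, liminf (a i) l ≤ c := by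
  have hbelow : ∀ i ∈ s, IsBoundedUnder (· ≥ ·) l (a i) := fun i _ =>
    isBoundedUnder_of ⟨0, ha i⟩
  have habove : ∀ i ∈ s, IsBoundedUnder (· ≤ ·) l (a i) := fun i hi =>
    hb.isBoundedUnder_le.mono_le <| Eventually.of_forall fun t =>
      (single_le_sum (fun j _ => ha j t) hi).trans (hab t)
  have hsum_below : IsBoundedUnder (· ≥ ·) l (fun t => ∑ i ∈ s, a i t) :=
    isBoundedUnder_of ⟨0, fun t => sum_nonneg fun i _ => ha i t⟩
  have hlimsup : limsup (fun t => ∑ i ∈ s, a i t) l ≤ c :=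
    hb.limsup_eq ▸ limsup_le_limsup (Eventually.of_forall hab)
      hsum_below.isCoboundedUnder_le hb.isBoundedUnder_le
  refine ⟨hlimsup, ?_⟩
  calc ∑ i ∈ s, liminf (a i) l
      ≤ liminf (fun t => ∑ i ∈ s, a i t) l :=
        sum_liminf_le_liminf_sum s hbelow habove
    _ ≤ limsup (fun t => ∑ i ∈ s, a i t) l :=
        liminf_le_limsup (hb.isBoundedUnder_le.mono_le (Eventually.of_forall hab)) hsum_below
    _ ≤ c := hlimsup

end Limits

lemma ae_tendsto_average_Icc {Ω : Type*} [MeasurableSpace Ω] {μ : Measure Ω}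
    (X : ℕ → Ω → ℝ) (hint : Integrable (X 1) μ) (hindep : Pairwise fun s t => X s ⟂ᵢ[μ] X t)
    (hident : ∀ t, IdentDistrib (X t) (X 1) μ μ) :
    ∀ᵐ ω ∂μ, Tendsto (fun n : ℕ => (∑ τ ∈ Icc 1 n, X τ ω) / n) atTop (𝓝 μ[X 1]) := by
  have hslln := strong_law_ae_real (fun n => X (n + 1)) hint
    (fun m n hmn => hindep (by omega)) fun n => hident (n + 1)
  filter_upwards [hslln] with ω hω
  convert hω using 3 with n
  rw [range_eq_Ico, sum_Ico_add' (X · ω) 0 n 1]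
  rfl

theorem longrun_received_upper_bound_general {V : Type*} [Fintype V] [DecidableEq V]
    {Ω : Type*} [MeasureSpace Ω] [IsProbabilityMeasure (ℙ : Measure Ω)]
    (G : SimpleGraph V) [DecidableRel G.Adj]
    (D : V → ℝ) (B : ℝ)
    -- the generated resources `D_i(t)`, i.i.d. across `t`, bounded, with mean `D_i`
    (Dgen : ℕ → Ω → V → ℝ)
    (hbdd : ∀ t ω i, 0 ≤ Dgen t ω i ∧ Dgen t ω i ≤ B)
    (hindep : iIndepFun Dgen ℙ)
    (hident : ∀ t, IdentDistrib (Dgen t) (Dgen 1) ℙ ℙ)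
    (hmean : ∀ t i, ∫ ω, Dgen t ω i = D i)
    -- the allocations `D_{ij}(t)`: nonnegative, supported on edges, within budget a.s.
    (alloc : ℕ → Ω → V → V → ℝ)
    (halloc_nonneg : ∀ t ω i j, 0 ≤ alloc t ω i j)
    (halloc_budget : ∀ᵐ ω, ∀ i : V, ∀ t : ℕ,
      ∑ τ ∈ Finset.Icc 1 t, ∑ j ∈ G.neighborFinset i, alloc τ ω i j ≤
        ∑ τ ∈ Finset.Icc 1 t, Dgen τ ω i)
    -- received resources and their running time averages
    (R Rbar : ℕ → Ω → V → ℝ)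
    (hR : ∀ t ω i, R t ω i = ∑ j ∈ G.neighborFinset i, alloc t ω j i)
    (hRbar : ∀ t ω i, Rbar t ω i = (∑ τ ∈ Finset.Icc 1 t, R τ ω i) / (t : ℝ)) :
    ∀ᵐ ω, ∀ S : Finset V,
      limsup (fun t : ℕ => ∑ i ∈ S, Rbar t ω i) atTop ≤ fS G D S ∧
      ∑ i ∈ S, liminf (fun t : ℕ => Rbar t ω i) atTop ≤ fS G D S := by
  have hslln : ∀ j, ∀ᵐ ω, Tendsto (fun n : ℕ => (∑ τ ∈ Icc 1 n, Dgen τ ω j) / n) atTop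
      (𝓝 (D j)) := fun j => by
    have hint : Integrable (fun ω => Dgen 1 ω j) :=
      .of_bound ((measurable_pi_apply j).comp_aemeasurable
        (hident 1).aemeasurable_fst).aestronglyMeasurable B <| ae_of_all _ fun ω => by
        rw [Real.norm_eq_abs, abs_of_nonneg (hbdd 1 ω j).1]
        exact (hbdd 1 ω j).2
    simpa only [hmean 1 j] using ae_tendsto_average_Icc (fun t ω => Dgen t ω j) hint
      (fun s t hst => (hindep.indepFun hst).comp (measurable_pi_apply j) (measurable_pi_apply j))
      fun t => (hident t).comp (measurable_pi_apply j)
  filter_upwards [halloc_budget, ae_all_iff.2 hslln] with ω hbudget hlln S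
  have hRbar_nonneg : ∀ i t, 0 ≤ Rbar t ω i := fun i t => by
    rw [hRbar]
    exact div_nonneg (sum_nonneg fun τ _ => (hR τ ω i).symm ▸
      sum_nonneg fun j _ => halloc_nonneg τ ω j i) t.cast_nonneg
  refine limsup_sum_le_and_sum_liminf_le S (a := fun i t => Rbar t ω i) hRbar_nonneg (fun t => ?_)
    (tendsto_finsetSum _ fun j _ => hlln j)
  simp only [hRbar, hR, ← sum_div]
  exact div_le_div_of_nonneg_right
    (sum_received_le_sum_generated G S _ (fun τ => halloc_nonneg τ ω) (hbudget · t)) t.cast_nonneg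

/-- under any (history-dependent) allocation policy, almost surely, for every
subset `S` of nodes, the long-run received resources cannot exceed the total endowment
`f(S)` of the neighbors of `S`: `limsup_t Σ_{i∈S} R̄_i(t) ≤ f(S)` and
`Σ_{i∈S} liminf_t R̄_i(t) ≤ f(S)`.
(Time is indexed by `t = 1, 2, …`; sums over time use `Finset.Icc 1 t`.) -/
theorem longrun_received_upper_bound {V : Type*} [Fintype V] [DecidableEq V]
    {Ω : Type*} [MeasureSpace Ω] [IsProbabilityMeasure (ℙ : Measure Ω)]
    (G : SimpleGraph V) [DecidableRel G.Adj]
    (hconn : G.Connected) (hniso : ∀ i, (G.neighborFinset i).Nonempty)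
    (D : V → ℝ) (hD : ∀ i, 0 < D i) (B : ℝ)
    -- the generated resources `D_i(t)`, i.i.d. across `t`, bounded, with mean `D_i`
    (Dgen : ℕ → Ω → V → ℝ)
    (hmeas : ∀ t, Measurable (Dgen t))
    (hbdd : ∀ t ω i, 0 ≤ Dgen t ω i ∧ Dgen t ω i ≤ B)
    (hindep : iIndepFun Dgen ℙ)
    (hident : ∀ t, IdentDistrib (Dgen t) (Dgen 1) ℙ ℙ)
    (hmean : ∀ t i, ∫ ω, Dgen t ω i = D i)
    -- the allocations `D_{ij}(t)`: nonnegative, supported on edges, within budget a.s.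
    (alloc : ℕ → Ω → V → V → ℝ)
    (halloc_nonneg : ∀ t ω i j, 0 ≤ alloc t ω i j)
    (halloc_supp : ∀ t ω i j, ¬ G.Adj i j → alloc t ω i j = 0)
    (halloc_budget : ∀ᵐ ω, ∀ i : V, ∀ t : ℕ,
      ∑ τ ∈ Finset.Icc 1 t, ∑ j ∈ G.neighborFinset i, alloc τ ω i j ≤
        ∑ τ ∈ Finset.Icc 1 t, Dgen τ ω i)
    -- received resources and their running time averages
    (R Rbar : ℕ → Ω → V → ℝ)
    (hR : ∀ t ω i, R t ω i = ∑ j ∈ G.neighborFinset i, alloc t ω j i)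
    (hRbar : ∀ t ω i, Rbar t ω i = (∑ τ ∈ Finset.Icc 1 t, R τ ω i) / (t : ℝ)) :
    ∀ᵐ ω, ∀ S : Finset V,
      limsup (fun t : ℕ => ∑ i ∈ S, Rbar t ω i) atTop ≤ fS G D S ∧
      ∑ i ∈ S, liminf (fun t : ℕ => Rbar t ω i) atTop ≤ fS G D S :=
  longrun_received_upper_bound_general G D B Dgen hbdd hindep hident hmean alloc halloc_nonneg
    halloc_budget R Rbar hR hRbar

end SharingEcon
end
end

section
/- Characterization of the lexicographically optimal vector in a polymatroid: a vector r ∈ A is lex-optimal if and only if Σ_{i∈L_1(r)} r_i = f(L_1(r)) and, for every 2 ≤ k ≤ K(r), Σ_{i∈L_k(r)} r_i = f(∪_{l=1}^{k} L_l(r)) − f(∪_{l=1}^{k−1} L_l(r)). -/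
open Finset
open scoped Classical

noncomputable section

/-!
Write `x i = r i / D i`. Both sides of the characterization say that every sublevel set
`{j | x j ≤ x i}` is tight, i.e. `∑ r = f` on it; on the side of the level sets this is a
telescoping sum. The lexicographic order of sorted vectors is read off the counting functions
`t ↦ #{i | x i ≤ t}`: `x` is lexicographically smaller than `y` iff the counts agree below some `t`
and `x` has more entries `≤ t`.

If all sublevel sets are tight and `r'` is lexicographically at least as good as `r`, then going up
through the levels, `r'` cannot drop below `r` on a level without changing a count, and tightness
leaves no room to exceed `r`; so `r' = r` on the relevant sublevel sets and `r'` is not better.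

Conversely, by submodularity the tight sets are closed under union and intersection. If a sublevel
set `S` is not tight, some `i ∈ S` lies in no tight subset of `S`. Either `i` lies in no tight set
at all, and `r i` can be raised, or the least tight set containing `i` contains some `j ∉ S`, so
`x i < x j`, and a small amount can be moved from `j` to `i`. Both moves improve `r`
lexicographically.
-/

namespace List

theorem lt_iff_exists_getD {α : Type*} [LinearOrder α] {l₁ l₂ : List α} (d : α)
    (h : l₁.length = l₂.length) :
    l₁ < l₂ ↔ ∃ k, (∀ j < k, l₁.getD j d = l₂.getD j d) ∧ l₁.getD k d < l₂.getD k d := by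
  refine List.lt_iff_exists.trans ⟨?_, ?_⟩
  · rintro (⟨-, hlt⟩ | ⟨k, hk₁, hk₂, hpre, hk⟩)
    · omega
    · refine ⟨k, fun j hj => ?_, by simpa [getD_eq_getElem, hk₁, hk₂] using hk⟩
      simpa [getD_eq_getElem, hj.trans hk₁, hj.trans hk₂] using hpre j hj
  · rintro ⟨k, hpre, hk⟩
    have hk₁ : k < l₁.length := by
      by_contra! hk₁
      rw [getD_eq_default _ _ hk₁, getD_eq_default _ _ (h ▸ hk₁)] at hk
      exact lt_irrefl d hk
    refine Or.inr ⟨k, hk₁, h ▸ hk₁, fun j hj => ?_, ?_⟩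
    · simpa [getD_eq_getElem, hj.trans hk₁, hj.trans (h ▸ hk₁)] using hpre j hj
    · simpa [getD_eq_getElem, hk₁, h ▸ hk₁] using hk

theorem getElem_le_iff_lt_countP {α : Type*} [LinearOrder α] {l : List α}
    (hl : l.Pairwise (· ≤ ·)) {i : ℕ} (hi : i < l.length) (t : α) :
    l[i] ≤ t ↔ i < l.countP (· ≤ t) := by
  induction l generalizing i with
  | nil => simp at hi
  | cons a l ih =>
    rw [pairwise_cons] at hl
    by_cases ha : a ≤ t
    · rcases i with _ | i
      · simp [ha]
      · simp [ha, ih hl.2 (by simpa using hi)]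
    · have hcount : (a :: l).countP (· ≤ t) = 0 := by
        refine countP_eq_zero.2 fun y hy hyt => ha ?_
        rcases mem_cons.1 hy with rfl | hy
        · simpa using hyt
        · exact (hl.1 y hy).trans (by simpa using hyt)
      have hai : a ≤ (a :: l)[i] := by
        rcases i with _ | i
        · exact le_rfl
        · exact hl.1 _ (getElem_mem _)
      simp only [hcount, Nat.not_lt_zero, iff_false, not_le]
      exact (not_le.1 ha).trans_le hai

end List

namespace SharingEcon

section LexOrder

variable {V : Type*} [Fintype V]

def countLE (x : V → ℝ) (t : ℝ) : ℕ := #{i | x i ≤ t}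

theorem length_sortedVec (x : V → ℝ) : (sortedVec x).length = Fintype.card V := by
  simp [sortedVec, Finset.card_univ]

theorem getElem_sortedVec_le_iff (x : V → ℝ) {i : ℕ} (hi : i < (sortedVec x).length) (t : ℝ) :
    (sortedVec x)[i] ≤ t ↔ i < countLE x t := by
  rw [List.getElem_le_iff_lt_countP (l := sortedVec x) (Multiset.pairwise_sort _ _) hi]
  have hcoe : ((sortedVec x : List ℝ) : Multiset ℝ) = univ.val.map x := Multiset.sort_eq _ _
  rw [← Multiset.coe_countP, hcoe, Multiset.countP_map, countLE, card_def, filter_val]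

theorem countLE_le_card (x : V → ℝ) (t : ℝ) : countLE x t ≤ Fintype.card V :=
  card_le_univ _

theorem countLE_lt_countLE_of_eqOn {x y : V → ℝ} {s : ℝ}
    (hxy : ∀ z, x z ≤ s → y z = x z) {j : V} (hyj : y j ≤ s) (hxj : s < x j) :
    countLE x s < countLE y s := by
  refine card_lt_card ((ssubset_iff_of_subset fun z hz => ?_).2 ⟨j, by simpa, by simpa⟩)
  simp only [mem_filter, mem_univ, true_and] at hz ⊢
  exact hxy z hz ▸ hz

theorem getElem_sortedVec_le_of_countLE_eq {x y : V → ℝ} {t : ℝ}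
    (hxy : ∀ s < t, countLE x s = countLE y s) {j : ℕ} (hjx : j < (sortedVec x).length)
    (hjy : j < (sortedVec y).length) (hj : (sortedVec x)[j] ≤ t) :
    (sortedVec x)[j] ≤ (sortedVec y)[j] := by
  by_contra! hlt
  have hy : j < countLE y (sortedVec y)[j] := (getElem_sortedVec_le_iff y hjy _).1 le_rfl
  rw [← hxy _ (hlt.trans_le hj), ← getElem_sortedVec_le_iff x hjx] at hy
  exact hy.not_gt hlt

theorem sortedVec_lt_iff_countLE (x y : V → ℝ) :
    sortedVec x < sortedVec y ↔
      ∃ t, (∀ s < t, countLE x s = countLE y s) ∧ countLE y t < countLE x t := by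
  have hlen : (sortedVec x).length = (sortedVec y).length := by
    rw [length_sortedVec, length_sortedVec]
  refine List.lt_iff_exists.trans ⟨?_, ?_⟩
  · rintro (⟨-, hlt⟩ | ⟨i, hix, hiy, hpre, hi⟩)
    · omega
    have hx := getElem_sortedVec_le_iff x hix
    have hy := getElem_sortedVec_le_iff y hiy
    refine ⟨(sortedVec x)[i], fun s hs => ?_, ?_⟩
    · have hxs : countLE x s ≤ i := not_lt.1 fun h => hs.not_ge ((hx s).2 h)
      have hys : countLE y s ≤ i := not_lt.1 fun h => (hs.trans hi).not_ge ((hy s).2 h)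
      have hagree : ∀ j < i, j < countLE x s ↔ j < countLE y s := fun j hj => by
        rw [← getElem_sortedVec_le_iff x (hj.trans hix),
          ← getElem_sortedVec_le_iff y (hj.trans hiy), hpre j hj]
      by_contra hne
      rcases Nat.lt_or_gt_of_ne hne with h | h
      · have := (hagree _ (by omega)).2 h
        omega
      · have := (hagree _ (by omega)).1 h
        omega
    · have hyi : countLE y (sortedVec x)[i] ≤ i := not_lt.1 fun h => hi.not_ge ((hy _).2 h)
      have hxi : i < countLE x (sortedVec x)[i] := (hx _).1 le_rfl
      omega
  · rintro ⟨t, hst, hlt⟩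
    set i := countLE y t
    have hix : i < (sortedVec x).length := by
      rw [length_sortedVec]; exact hlt.trans_le (countLE_le_card x t)
    have hiy : i < (sortedVec y).length := hlen ▸ hix
    refine Or.inr ⟨i, hix, hiy, fun j hj => le_antisymm ?_ ?_, ?_⟩
    · exact getElem_sortedVec_le_of_countLE_eq hst _ _
        ((getElem_sortedVec_le_iff x _ t).2 (hj.trans hlt))
    · exact getElem_sortedVec_le_of_countLE_eq (fun s hs => (hst s hs).symm) _ _
        ((getElem_sortedVec_le_iff y _ t).2 hj)
    · exact ((getElem_sortedVec_le_iff x hix t).2 hlt).trans_lt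
        (not_le.1 fun h => (lt_irrefl i) ((getElem_sortedVec_le_iff y hiy t).1 h))

theorem lexGE_iff_countLE (x y : V → ℝ) :
    lexGE x y ↔ ∀ t, (∀ s < t, countLE x s = countLE y s) → countLE x t ≤ countLE y t := by
  have hlen : (sortedVec y).length = (sortedVec x).length := by
    rw [length_sortedVec, length_sortedVec]
  have hlt := (List.lt_iff_exists_getD 0 hlen).symm
  simp_rw [eq_comm (a := (sortedVec y).getD _ 0)] at hlt
  rw [lexGE, hlt, eq_comm, ← le_iff_eq_or_lt, ← not_lt, sortedVec_lt_iff_countLE]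
  push Not
  rfl

theorem not_lexGE_of_raise {x y : V → ℝ} {i : V} (hi : x i < y i)
    (hothers : ∀ z ≠ i, y z = x z ∨ x i < x z ∧ x i < y z) : ¬ lexGE x y := by
  rw [lexGE_iff_countLE]
  push Not
  refine ⟨x i, fun s hs => ?_, card_lt_card ?_⟩
  · refine congrArg card (filter_congr fun z _ => ?_)
    by_cases hz : z = i
    · subst hz
      exact iff_of_false hs.not_ge (hs.trans hi).not_ge
    · rcases hothers z hz with h | ⟨hxz, hyz⟩
      · rw [h]
      · exact iff_of_false (hs.trans hxz).not_ge (hs.trans hyz).not_ge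
  · refine (ssubset_iff_of_subset fun z hz => ?_).2 ⟨i, by simp, by simpa using hi⟩
    simp only [mem_filter, mem_univ, true_and] at hz ⊢
    have hzi : z ≠ i := by rintro rfl; exact hz.not_gt hi
    rcases hothers z hzi with h | ⟨-, hyz⟩
    · exact h ▸ hz
    · exact absurd hz hyz.not_ge

end LexOrder

def Tight {V : Type*} (f : Finset V → ℝ) (r : V → ℝ) (S : Finset V) : Prop :=
  ∑ i ∈ S, r i = f S

theorem tight_empty {V : Type*} {f : Finset V → ℝ} {r : V → ℝ} (hf0 : f ∅ = 0) :
    Tight f r ∅ := by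
  simp [Tight, hf0]

section TightSets

variable {V : Type*} [DecidableEq V] {f : Finset V → ℝ} {r : V → ℝ} {S T : Finset V}

theorem Tight.union (hsub : ∀ S T : Finset V, f (S ∩ T) + f (S ∪ T) ≤ f S + f T)
    (hr : r ∈ polyA f) (hS : Tight f r S) (hT : Tight f r T) : Tight f r (S ∪ T) := by
  have hsum := sum_union_inter (s₁ := S) (s₂ := T) (f := r)
  unfold Tight at *
  linarith [hr.2 (S ∪ T), hr.2 (S ∩ T), hsub S T]

theorem Tight.inter (hsub : ∀ S T : Finset V, f (S ∩ T) + f (S ∪ T) ≤ f S + f T)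
    (hr : r ∈ polyA f) (hS : Tight f r S) (hT : Tight f r T) : Tight f r (S ∩ T) := by
  have hsum := sum_union_inter (s₁ := S) (s₂ := T) (f := r)
  unfold Tight at *
  linarith [hr.2 (S ∪ T), hr.2 (S ∩ T), hsub S T]

theorem tight_of_forall_exists_tight_subset (hf0 : f ∅ = 0)
    (hsub : ∀ S T : Finset V, f (S ∩ T) + f (S ∪ T) ≤ f S + f T) (hr : r ∈ polyA f)
    (h : ∀ i ∈ S, ∃ T, Tight f r T ∧ i ∈ T ∧ T ⊆ S) : Tight f r S := by
  choose! T hT hiT hTS using h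
  have hS : S.sup T = S :=
    le_antisymm (Finset.sup_le hTS) fun i hi => mem_sup.2 ⟨i, hi, hiT i hi⟩
  rw [← hS]
  exact sup_induction (tight_empty hf0) (fun _ h₁ _ h₂ => h₁.union hsub hr h₂) hT

theorem exists_least_tight_mem [Fintype V]
    (hsub : ∀ S T : Finset V, f (S ∩ T) + f (S ∪ T) ≤ f S + f T) (hr : r ∈ polyA f)
    {i : V} (hS : Tight f r S) (hiS : i ∈ S) :
    ∃ C, Tight f r C ∧ i ∈ C ∧ ∀ T, Tight f r T → i ∈ T → C ⊆ T := by
  set F : Finset (Finset V) := {T | Tight f r T ∧ i ∈ T}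
  have hF : F.Nonempty := ⟨S, by simp [F, hS, hiS]⟩
  refine ⟨F.inf' hF id, ?_, ?_, ?_⟩
  · exact inf'_induction hF id (fun _ h₁ _ h₂ => Tight.inter hsub hr h₁ h₂)
      fun T hT => (mem_filter.1 hT).2.1
  · exact (mem_inf' hF).2 fun T hT => (mem_filter.1 hT).2.2
  · exact fun T hT hiT => inf'_le id (by simp [F, hT, hiT])

end TightSets

section Perturbation

variable {V : Type*} [Fintype V] {f : Finset V → ℝ} {D r : V → ℝ}

theorem exists_pos_le_slack (hr : r ∈ polyA f) (p : Finset V → Prop)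
    (hp : ∀ T, p T → ¬ Tight f r T) : ∃ ε > 0, ∀ T, p T → ε ≤ f T - ∑ i ∈ T, r i := by
  rcases (univ.filter p).eq_empty_or_nonempty with hF | hF
  · exact ⟨1, one_pos, fun T hT => absurd (filter_eq_empty_iff.1 hF (mem_univ T)) (not_not.2 hT)⟩
  obtain ⟨T₀, hT₀, hmin⟩ := exists_min_image _ (fun T => f T - ∑ i ∈ T, r i) hF
  have hT₀ := (mem_filter.1 hT₀).2
  refine ⟨_, sub_pos.2 ((hr.2 T₀).lt_of_ne fun h => hp T₀ hT₀ h), fun T hT => hmin T ?_⟩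
  exact mem_filter.2 ⟨mem_univ T, hT⟩

theorem not_lexOptimal_of_raise {A : Set (V → ℝ)} {r' : V → ℝ} (hr' : r' ∈ A) {i : V}
    (hi : ratio D r i < ratio D r' i)
    (hothers : ∀ z ≠ i, ratio D r' z = ratio D r z ∨
      ratio D r i < ratio D r z ∧ ratio D r i < ratio D r' z) :
    ¬ LexOptimal A D r :=
  fun hopt => not_lexGE_of_raise hi hothers (hopt.2 r' hr')

theorem not_lexOptimal_of_forall_tight_not_mem (hD : ∀ i, 0 < D i) (hr : r ∈ polyA f) {i : V}
    (hfree : ∀ T, Tight f r T → i ∉ T) : ¬ LexOptimal (polyA f) D r := by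
  obtain ⟨ε, hε, hslack⟩ :=
    exists_pos_le_slack hr (i ∈ ·) fun T hiT hT => hfree T hT hiT
  refine not_lexOptimal_of_raise (i := i) (r' := r + Pi.single i ε)
    ⟨fun z => ?_, fun T => ?_⟩ ?_ ?_
  · rcases eq_or_ne z i with rfl | hz
    · simpa using add_nonneg (hr.1 z) hε.le
    · simpa [hz] using hr.1 z
  · simp only [Pi.add_apply]
    rw [sum_add_distrib, sum_pi_single']
    split_ifs with hiT
    · linarith [hslack T hiT]
    · simpa using hr.2 T
  · simp only [ratio, Pi.add_apply, Pi.single_eq_same]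
    exact div_lt_div_of_pos_right (lt_add_of_pos_right _ hε) (hD i)
  · intro z hz
    simp [ratio, hz]

theorem not_lexOptimal_of_forall_tight_mem_imp_mem (hD : ∀ i, 0 < D i) (hr : r ∈ polyA f)
    {i j : V} (hij : ratio D r i < ratio D r j) (hdep : ∀ T, Tight f r T → i ∈ T → j ∈ T) :
    ¬ LexOptimal (polyA f) D r := by
  have hne : i ≠ j := by rintro rfl; exact lt_irrefl _ hij
  obtain ⟨ε, hε, hslack⟩ := exists_pos_le_slack hr (fun T => i ∈ T ∧ j ∉ T)
    fun T hT hTt => hT.2 (hdep T hTt hT.1)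
  obtain ⟨δ, hδ, hδε, hδj⟩ : ∃ δ > 0, δ ≤ ε ∧ D j * ratio D r i + δ < r j := by
    have hgap : 0 < r j - D j * ratio D r i := by
      linarith [(lt_div_iff₀ (hD j)).1 hij]
    exact ⟨min ε (r j - D j * ratio D r i) / 2, by positivity,
      by linarith [min_le_left ε (r j - D j * ratio D r i)],
      by linarith [min_le_right ε (r j - D j * ratio D r i)]⟩
  have hDj : 0 ≤ D j * ratio D r i := mul_nonneg (hD j).le (div_nonneg (hr.1 i) (hD i).le)
  refine not_lexOptimal_of_raise (i := i) (r' := r + Pi.single i δ - Pi.single j δ)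
    ⟨fun z => ?_, fun T => ?_⟩ ?_ ?_
  · rcases eq_or_ne z i with rfl | hzi
    · simpa [hne] using add_nonneg (hr.1 z) hδ.le
    rcases eq_or_ne z j with rfl | hzj
    · simp [hzi]; linarith
    · simpa [hzi, hzj] using hr.1 z
  · simp only [Pi.add_apply, Pi.sub_apply]
    rw [sum_sub_distrib, sum_add_distrib, sum_pi_single', sum_pi_single']
    have := hr.2 T
    split_ifs with hiT hjT hjT
    · linarith
    · linarith [hslack T ⟨hiT, hjT⟩]
    · linarith
    · linarith
  · simp only [ratio, Pi.add_apply, Pi.sub_apply, Pi.single_eq_same, Pi.single_eq_of_ne hne]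
    exact div_lt_div_of_pos_right (by linarith) (hD i)
  · intro z hzi
    rcases eq_or_ne z j with rfl | hzj
    · refine Or.inr ⟨hij, ?_⟩
      simp only [ratio, Pi.add_apply, Pi.sub_apply, Pi.single_eq_same, Pi.single_eq_of_ne hzi]
      rw [lt_div_iff₀ (hD z)]
      simp only [ratio] at hδj
      linarith
    · simp [ratio, hzi, hzj]

end Perturbation

section Characterization

variable {V : Type*} [Fintype V] {f : Finset V → ℝ} {D r : V → ℝ}

theorem tight_sublevel_of_lexOptimal [DecidableEq V] (hf0 : f ∅ = 0)
    (hsub : ∀ S T : Finset V, f (S ∩ T) + f (S ∪ T) ≤ f S + f T) (hD : ∀ i, 0 < D i)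
    (hr : r ∈ polyA f) (hopt : LexOptimal (polyA f) D r) (c : ℝ) :
    Tight f r {j | ratio D r j ≤ c} := by
  refine tight_of_forall_exists_tight_subset hf0 hsub hr fun i hi => ?_
  by_contra! hout
  by_cases hfree : ∃ T, Tight f r T ∧ i ∈ T
  · obtain ⟨T₀, hT₀, hiT₀⟩ := hfree
    obtain ⟨C, hC, hiC, hCleast⟩ := exists_least_tight_mem hsub hr hT₀ hiT₀
    obtain ⟨j, hjC, hj⟩ := not_subset.1 (hout C hC hiC)
    simp only [mem_filter, mem_univ, true_and, not_le] at hi hj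
    exact not_lexOptimal_of_forall_tight_mem_imp_mem hD hr (hi.trans_lt hj)
      (fun T hT hiT => hCleast T hT hiT hjC) hopt
  · push Not at hfree
    exact not_lexOptimal_of_forall_tight_not_mem hD hr hfree hopt

theorem eq_of_ratio_le_of_countLE_eq (hD : ∀ i, 0 < D i) {r' : V → ℝ} (hr' : r' ∈ polyA f)
    (htight : ∀ i, Tight f r {j | ratio D r j ≤ ratio D r i}) {t : ℝ}
    (hcount : ∀ s < t, countLE (ratio D r) s = countLE (ratio D r') s) :
    ∀ i, ratio D r i ≤ t → r' i = r i := by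
  by_contra! hbad
  obtain ⟨i₀, hi₀, hmin⟩ := exists_min_image {i | ratio D r i ≤ t ∧ r' i ≠ r i} (ratio D r)
    (by simpa [filter_nonempty_iff] using hbad)
  simp only [mem_filter, mem_univ, true_and] at hi₀ hmin
  have hbelow : ∀ z, ratio D r z < ratio D r i₀ → r' z = r z := fun z hz => by
    by_contra hne
    exact hz.not_ge (hmin z ⟨by linarith [hi₀.1], hne⟩)
  -- `r' z < r z` on the level of `i₀` would add `z` to a sublevel set of `ratio D r'` below `t`
  have hdom : ∀ z ∈ ({j | ratio D r j ≤ ratio D r i₀} : Finset V), r z ≤ r' z := by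
    intro z hz
    simp only [mem_filter, mem_univ, true_and] at hz
    rcases hz.lt_or_eq with hlt | heq
    · exact (hbelow z hlt).ge
    by_contra! hz'
    have hyz : ratio D r' z < ratio D r i₀ := heq ▸ div_lt_div_of_pos_right hz' (hD z)
    refine (hcount _ (hyz.trans_le hi₀.1)).not_lt (countLE_lt_countLE_of_eqOn ?_ le_rfl (heq ▸ hyz))
    intro w hw
    simp only [ratio, hbelow w (hw.trans_lt hyz)]
  have hsum := (sum_eq_sum_iff_of_le hdom).1
    (le_antisymm (sum_le_sum hdom) ((htight i₀).symm ▸ hr'.2 _))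
  exact hi₀.2 (hsum i₀ (by simp)).symm

theorem lexOptimal_of_tight_sublevel (hD : ∀ i, 0 < D i) (hr : r ∈ polyA f)
    (htight : ∀ i, Tight f r {j | ratio D r j ≤ ratio D r i}) : LexOptimal (polyA f) D r := by
  refine ⟨hr, fun r' hr' => (lexGE_iff_countLE _ _).2 fun t hcount => card_le_card fun i hi => ?_⟩
  simp only [mem_filter, mem_univ, true_and] at hi ⊢
  rwa [eq_of_ratio_le_of_countLE_eq hD hr' htight hcount i hi]

theorem lexOptimal_iff_forall_tight_sublevel [DecidableEq V] (hf0 : f ∅ = 0)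
    (hsub : ∀ S T : Finset V, f (S ∩ T) + f (S ∪ T) ≤ f S + f T) (hD : ∀ i, 0 < D i)
    (hr : r ∈ polyA f) :
    LexOptimal (polyA f) D r ↔ ∀ i, Tight f r {j | ratio D r j ≤ ratio D r i} :=
  ⟨fun hopt _ => tight_sublevel_of_lexOptimal hf0 hsub hD hr hopt _,
    lexOptimal_of_tight_sublevel hD hr⟩

end Characterization

section Levels

variable {V : Type*} [Fintype V] {f : Finset V → ℝ} {D r : V → ℝ}

theorem v_lt_v {l m : ℕ} (hl : 1 ≤ l) (hlm : l < m) (hm : m ≤ numLevels D r) :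
    v D r l < v D r m := by
  have hsorted := List.pairwise_iff_getElem.1 (sortedLT_sort (univ.image (ratio D r))).pairwise
  unfold numLevels at hm
  rw [v, v, List.getD_eq_getElem _ _ (by omega), List.getD_eq_getElem _ _ (by omega)]
  exact hsorted _ _ _ _ (by omega)

theorem v_le_v {l m : ℕ} (hl : 1 ≤ l) (hlm : l ≤ m) (hm : m ≤ numLevels D r) :
    v D r l ≤ v D r m :=
  hlm.eq_or_lt.elim (fun h => h ▸ le_rfl) fun h => (v_lt_v hl h hm).le

theorem exists_v_eq_ratio (i : V) : ∃ k, 1 ≤ k ∧ k ≤ numLevels D r ∧ v D r k = ratio D r i := by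
  have hmem : ratio D r i ∈ vals D r := by simp [vals]
  obtain ⟨n, hn, hget⟩ := List.mem_iff_getElem.1 hmem
  exact ⟨n + 1, by omega, hn, by rw [v, Nat.add_sub_cancel, List.getD_eq_getElem _ _ hn, hget]⟩

theorem exists_ratio_eq_v {k : ℕ} (hk : 1 ≤ k) (hkK : k ≤ numLevels D r) :
    ∃ i, ratio D r i = v D r k := by
  have hmem : v D r k ∈ vals D r := by
    unfold numLevels at hkK
    rw [v, List.getD_eq_getElem _ _ (by omega)]
    exact List.getElem_mem _
  simpa [vals] using hmem

theorem biUnion_level_eq [DecidableEq V] {k : ℕ} (hk : 1 ≤ k) (hkK : k ≤ numLevels D r) :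
    (Icc 1 k).biUnion (level D r) = ({i | ratio D r i ≤ v D r k} : Finset V) := by
  ext i
  simp only [mem_biUnion, mem_Icc, level, mem_filter, mem_univ, true_and]
  constructor
  · rintro ⟨l, ⟨hl, hlk⟩, hi⟩
    exact hi ▸ v_le_v hl hlk hkK
  · intro hi
    obtain ⟨l, hl, hlK, hv⟩ := exists_v_eq_ratio (D := D) (r := r) i
    refine ⟨l, ⟨hl, not_lt.1 fun hkl => ?_⟩, hv.symm⟩
    exact (v_lt_v hk hkl hlK).not_ge (hv ▸ hi)

theorem forall_tight_sublevel_iff [DecidableEq V] :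
    (∀ i, Tight f r {j | ratio D r j ≤ ratio D r i}) ↔
      ∀ k, 1 ≤ k → k ≤ numLevels D r → Tight f r ((Icc 1 k).biUnion (level D r)) := by
  constructor
  · intro h k hk hkK
    obtain ⟨i, hi⟩ := exists_ratio_eq_v hk hkK
    rw [biUnion_level_eq hk hkK, ← hi]
    exact h i
  · intro h i
    obtain ⟨k, hk, hkK, hv⟩ := exists_v_eq_ratio (D := D) (r := r) i
    rw [← hv, ← biUnion_level_eq hk hkK]
    exact h k hk hkK

theorem sum_biUnion_level_eq_add [DecidableEq V] {k : ℕ} (hk : 2 ≤ k)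
    (hkK : k ≤ numLevels D r) :
    ∑ i ∈ (Icc 1 k).biUnion (level D r), r i =
      ∑ i ∈ (Icc 1 (k - 1)).biUnion (level D r), r i + ∑ i ∈ level D r k, r i := by
  have hdisj : Disjoint (level D r k) ((Icc 1 (k - 1)).biUnion (level D r)) := by
    rw [biUnion_level_eq (by omega) (by omega), disjoint_left]
    intro i hik hi
    simp only [level, mem_filter, mem_univ, true_and] at hik hi
    exact (v_lt_v (by omega) (by omega) hkK).not_ge (hik ▸ hi)
  rw [← insert_Icc_sub_one_right_eq_Icc (by omega : 1 ≤ k), biUnion_insert, sum_union hdisj,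
    add_comm]

theorem forall_tight_biUnion_level_iff [DecidableEq V] (hf0 : f ∅ = 0) :
    (∀ k, 1 ≤ k → k ≤ numLevels D r → Tight f r ((Icc 1 k).biUnion (level D r))) ↔
      (∑ i ∈ level D r 1, r i = f (level D r 1) ∧
        ∀ k, 2 ≤ k → k ≤ numLevels D r →
          ∑ i ∈ level D r k, r i =
            f ((Icc 1 k).biUnion (level D r)) - f ((Icc 1 (k - 1)).biUnion (level D r))) := by
  have hU₁ : (Icc 1 1).biUnion (level D r) = level D r 1 := by simp
  constructor
  · intro h
    refine ⟨?_, fun k hk hkK => ?_⟩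
    · rcases Nat.eq_zero_or_pos (numLevels D r) with hK | hK
      · have hempty : level D r 1 = ∅ := eq_empty_of_forall_notMem fun i _ => by
          obtain ⟨k, hk, hkK, -⟩ := exists_v_eq_ratio (D := D) (r := r) i
          omega
        simp [hempty, hf0]
      · simpa [Tight, hU₁] using h 1 le_rfl hK
    · have hk' := h k (by omega) hkK
      have hk'' := h (k - 1) (by omega) (by omega)
      unfold Tight at hk' hk''
      linarith [sum_biUnion_level_eq_add (r := r) hk hkK]
  · rintro ⟨h₁, hstep⟩ k hk hkK
    induction k, hk using Nat.le_induction with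
    | base => rwa [Tight, hU₁]
    | succ k hk ih =>
      have hsum := sum_biUnion_level_eq_add (r := r) (by omega : 2 ≤ k + 1) hkK
      have hlevel := hstep (k + 1) (by omega) hkK
      have hprev := ih (by omega)
      simp only [Nat.add_sub_cancel] at hsum hlevel
      unfold Tight at hprev ⊢
      linarith

end Levels

theorem lexopt_characterization_general {V : Type*} [Fintype V] [DecidableEq V]
    (f : Finset V → ℝ) (hf0 : f ∅ = 0)
    (hsub : ∀ S T : Finset V, f (S ∩ T) + f (S ∪ T) ≤ f S + f T)
    (D : V → ℝ) (hD : ∀ i, 0 < D i)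
    (r : V → ℝ) (hr : r ∈ polyA f) :
    LexOptimal (polyA f) D r ↔
      (∑ i ∈ level D r 1, r i = f (level D r 1) ∧
        ∀ k : ℕ, 2 ≤ k → k ≤ numLevels D r →
          ∑ i ∈ level D r k, r i =
            f ((Finset.Icc 1 k).biUnion (level D r)) -
              f ((Finset.Icc 1 (k - 1)).biUnion (level D r))) := by
  rw [lexOptimal_iff_forall_tight_sublevel hf0 hsub hD hr, forall_tight_sublevel_iff,
    forall_tight_biUnion_level_iff hf0]

/-- a vector `r ∈ A` is lexicographically optimal (for the ratios `r_i/D_i`)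
if and only if `Σ_{i∈L_1} r_i = f(L_1)` and, for every `2 ≤ k ≤ K(r)`,
`Σ_{i∈L_k} r_i = f(∪_{l=1}^{k} L_l) − f(∪_{l=1}^{k−1} L_l)`. -/
theorem lexopt_characterization {V : Type*} [Fintype V] [DecidableEq V]
    (f : Finset V → ℝ) (hf0 : f ∅ = 0)
    (hmono : ∀ S T : Finset V, S ⊆ T → f S ≤ f T)
    (hsub : ∀ S T : Finset V, f (S ∩ T) + f (S ∪ T) ≤ f S + f T)
    (D : V → ℝ) (hD : ∀ i, 0 < D i)
    (r : V → ℝ) (hr : r ∈ polyA f) :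
    LexOptimal (polyA f) D r ↔
      (∑ i ∈ level D r 1, r i = f (level D r 1) ∧
        ∀ k : ℕ, 2 ≤ k → k ≤ numLevels D r →
          ∑ i ∈ level D r k, r i =
            f ((Finset.Icc 1 k).biUnion (level D r)) -
              f ((Finset.Icc 1 (k - 1)).biUnion (level D r))) :=
  lexopt_characterization_general f hf0 hsub D hD r hr

end SharingEcon
end
end
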